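/- Let d ≥ 1 be an integer, let α > 0, let β satisfy 0 < β < d, and let c₀ > 0. Let φ : ℝ^d → [0, ∞) be a measurable function satisfying φ(x) ≤ c₀ · min(1, |x|^{−d−α}) for all x ∈ ℝ^d. Then there exists a constant c₁ > 0 such that for all t > 0 and all w ∈ ℝ^d, ∫_{ℝ^d} t^{−d/α} φ((w − u) · t^{−1/α}) · |u|^{−β} du ≤ c₁ · t^{−β/α}. -/

import Mathlib

/-!
Substituting `x = t^{-1/α} (w - u)` and using that `|u|^{-β}` is homogeneous of degree `-β`
turns the integral into `t^{-β/α} ∫ φ(x) |z - x|^{-β} dx` with `z = t^{-1/α} w`, so it suffices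
to bound the latter uniformly in `z`. Since `|y|^{-β} ≤ 1_{|y|<1} |y|^{-β} + 1`, it is at most
`c₀ ∫_{|y|<1} |y|^{-β} dy + ∫ φ`, which is finite because `β < d` and `φ` decays faster than
`|x|^{-d}`.
-/

open MeasureTheory Metric Module Set

theorem Real.max_one_rpow_neg_le {a r : ℝ} (ha : 0 ≤ a) (hr : 0 ≤ r) :
    max 1 a ^ (-r) ≤ 2 ^ r * (1 + a) ^ (-r) := by
  have h : 2 ^ r * (1 + a) ^ (-r) = ((1 + a) / 2) ^ (-r) := by
    rw [Real.div_rpow (by positivity) zero_le_two, Real.rpow_neg zero_le_two, div_inv_eq_mul,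
      mul_comm]
  rw [h]
  refine Real.rpow_le_rpow_of_nonpos (by positivity) ?_ (neg_nonpos.2 hr)
  rcases le_total a 1 with h1 | h1
  · rw [max_eq_left h1]; linarith
  · rw [max_eq_right h1]; linarith

theorem norm_rpow_neg_le_indicator_ball_add_one {E : Type*} [SeminormedAddCommGroup E] {β : ℝ}
    (hβ : 0 ≤ β) (y : E) :
    ‖y‖ ^ (-β) ≤ (ball 0 1).indicator (fun y : E => ‖y‖ ^ (-β)) y + 1 := by
  by_cases hy : y ∈ ball (0 : E) 1
  · simp [indicator_of_mem hy]
  · rw [indicator_of_notMem hy, zero_add]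
    exact Real.rpow_le_one_of_one_le_of_nonpos (by simpa using hy) (neg_nonpos.2 hβ)

variable {E : Type*} [NormedAddCommGroup E] [NormedSpace ℝ E] [FiniteDimensional ℝ E]
  [MeasurableSpace E] [BorelSpace E] {μ : Measure E} [μ.IsAddHaarMeasure]

theorem integrable_of_norm_le_of_norm_le_rpow_neg {F : Type*} [NormedAddCommGroup F] {f : E → F}
    {C r : ℝ} (hr : finrank ℝ E < r) (hf : AEStronglyMeasurable f μ) (h_bdd : ∀ x, ‖f x‖ ≤ C)
    (h_decay : ∀ x, 1 < ‖x‖ → ‖f x‖ ≤ C * ‖x‖ ^ (-r)) :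
    Integrable f μ := by
  have hr0 : 0 ≤ r := (Nat.cast_nonneg _).trans hr.le
  refine ((integrable_one_add_norm hr).const_mul (C * 2 ^ r)).mono' hf (.of_forall fun x => ?_)
  have hC : 0 ≤ C := (norm_nonneg _).trans (h_bdd x)
  calc ‖f x‖ ≤ C * max 1 ‖x‖ ^ (-r) := by
        rcases le_or_gt ‖x‖ 1 with hx | hx
        · simpa [max_eq_left hx] using h_bdd x
        · simpa [max_eq_right hx.le] using h_decay x hx
    _ ≤ C * (2 ^ r * (1 + ‖x‖) ^ (-r)) := by
        gcongr; exact Real.max_one_rpow_neg_le (norm_nonneg x) hr0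
    _ = C * 2 ^ r * (1 + ‖x‖) ^ (-r) := by ring

theorem integral_mul_norm_sub_rpow_neg_le {φ : E → ℝ} {c₀ β : ℝ} (hφ : Integrable φ μ)
    (hφ_nonneg : ∀ x, 0 ≤ φ x) (hφ_le : ∀ x, φ x ≤ c₀) (hβ0 : 0 ≤ β)
    (hβd : β < finrank ℝ E) (z : E) :
    ∫ x, φ x * ‖z - x‖ ^ (-β) ∂μ ≤ c₀ * ∫ y in ball 0 1, ‖y‖ ^ (-β) ∂μ + ∫ x, φ x ∂μ := by
  set K := (ball (0 : E) 1).indicator fun y : E => ‖y‖ ^ (-β)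
  have hK : Integrable K μ := by
    refine (integrableOn_ball_of_norm_le_rpow (C := 1) ?_ hβd (.of_forall fun y => ?_)
      ?_).integrable_indicator measurableSet_ball
    · exact_mod_cast hβ0.trans_lt hβd
    · simp [abs_of_nonneg (Real.rpow_nonneg (norm_nonneg y) _)]
    · exact (continuous_norm.measurable.pow_const _).aestronglyMeasurable
  have hK_comp : Integrable (fun x => c₀ * K (z - x)) μ := (hK.comp_sub_left z).const_mul c₀
  calc ∫ x, φ x * ‖z - x‖ ^ (-β) ∂μ ≤ ∫ x, c₀ * K (z - x) + φ x ∂μ := by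
        refine integral_mono_of_nonneg
          (.of_forall fun x => mul_nonneg (hφ_nonneg x) (by positivity)) (hK_comp.add hφ)
          (.of_forall fun x => ?_)
        calc φ x * ‖z - x‖ ^ (-β) ≤ φ x * (K (z - x) + 1) :=
              mul_le_mul_of_nonneg_left (norm_rpow_neg_le_indicator_ball_add_one hβ0 _)
                (hφ_nonneg x)
          _ ≤ c₀ * K (z - x) + φ x := by
              have : 0 ≤ K (z - x) := indicator_nonneg (fun y _ => by positivity) _
              nlinarith [hφ_le x]
    _ = c₀ * ∫ y in ball 0 1, ‖y‖ ^ (-β) ∂μ + ∫ x, φ x ∂μ := by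
        rw [integral_add hK_comp hφ, integral_const_mul, integral_sub_left_eq_self K μ z,
          integral_indicator measurableSet_ball]

theorem integral_comp_smul_sub_mul_norm_rpow_neg (φ : E → ℝ) {s : ℝ} (hs : 0 < s) (β : ℝ)
    (w : E) :
    ∫ u, φ (s • (w - u)) * ‖u‖ ^ (-β) ∂μ =
      s ^ (β - finrank ℝ E) * ∫ x, φ x * ‖s • w - x‖ ^ (-β) ∂μ := by
  have h_homog : ∀ x : E, ‖w - s⁻¹ • x‖ ^ (-β) = s ^ β * ‖s • w - x‖ ^ (-β) := by
    intro x
    rw [← inv_smul_smul₀ hs.ne' w, ← smul_sub, smul_inv_smul₀ hs.ne', norm_smul,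
      Real.norm_of_nonneg (inv_nonneg.2 hs.le), Real.mul_rpow (inv_nonneg.2 hs.le) (norm_nonneg _),
      Real.inv_rpow hs.le, Real.rpow_neg hs.le, inv_inv]
  calc ∫ u, φ (s • (w - u)) * ‖u‖ ^ (-β) ∂μ = ∫ u, φ (s • u) * ‖w - u‖ ^ (-β) ∂μ := by
        rw [← integral_sub_left_eq_self _ μ w]; simp only [sub_sub_cancel]
    _ = ∫ u, (fun x => φ x * ‖w - s⁻¹ • x‖ ^ (-β)) (s • u) ∂μ := by
        simp only [inv_smul_smul₀ hs.ne']
    _ = (s ^ finrank ℝ E)⁻¹ * ∫ x, s ^ β * (φ x * ‖s • w - x‖ ^ (-β)) ∂μ := by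
        rw [Measure.integral_comp_smul_of_nonneg μ (fun x => φ x * ‖w - s⁻¹ • x‖ ^ (-β)) s
          (hR := hs.le), smul_eq_mul]
        simp only [h_homog, mul_left_comm]
    _ = s ^ (β - finrank ℝ E) * ∫ x, φ x * ‖s • w - x‖ ^ (-β) ∂μ := by
        rw [integral_const_mul, Real.rpow_sub hs, Real.rpow_natCast]; ring

theorem riesz_kernel_single_integral_bound_general (d : ℕ) (α β c₀ : ℝ)
    (hα : 0 < α) (hβ0 : 0 < β) (hβd : β < (d : ℝ))
    (φ : EuclideanSpace ℝ (Fin d) → ℝ)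
    (hφ_meas : Measurable φ) (hφ_nonneg : ∀ x, 0 ≤ φ x)
    (hφ_bdd : ∀ x, φ x ≤ c₀)
    (hφ_decay : ∀ x : EuclideanSpace ℝ (Fin d), x ≠ 0 → φ x ≤ c₀ * ‖x‖ ^ (-((d : ℝ) + α))) :
    ∃ c₁ > 0, ∀ t : ℝ, 0 < t → ∀ w : EuclideanSpace ℝ (Fin d),
      (∫ u : EuclideanSpace ℝ (Fin d),
        t ^ (-(d : ℝ) / α) * φ ((t ^ (-(1 : ℝ) / α)) • (w - u)) * ‖u‖ ^ (-β))
        ≤ c₁ * t ^ (-β / α) := by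
  have hdim : finrank ℝ (EuclideanSpace ℝ (Fin d)) = d := finrank_euclideanSpace_fin
  have hφ_int : Integrable φ := by
    refine integrable_of_norm_le_of_norm_le_rpow_neg (C := c₀) (r := d + α)
      (by rw [hdim]; linarith) hφ_meas.aestronglyMeasurable (fun x => ?_) (fun x hx => ?_)
    · rw [Real.norm_of_nonneg (hφ_nonneg x)]; exact hφ_bdd x
    · rw [Real.norm_of_nonneg (hφ_nonneg x)]
      exact hφ_decay x (norm_pos_iff.1 (one_pos.trans hx))
  obtain ⟨C, hC⟩ : ∃ C, ∀ z, ∫ x, φ x * ‖z - x‖ ^ (-β) ≤ C :=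
    ⟨_, integral_mul_norm_sub_rpow_neg_le hφ_int hφ_nonneg hφ_bdd hβ0.le (by rwa [hdim])⟩
  refine ⟨max C 1, lt_max_of_lt_right one_pos, fun t ht w => ?_⟩
  set s := t ^ (-(1 : ℝ) / α)
  have h_exp : t ^ (-(d : ℝ) / α) * s ^ (β - d) = t ^ (-β / α) := by
    rw [← Real.rpow_mul ht.le, ← Real.rpow_add ht]; congr 1; field_simp; ring
  calc ∫ u, t ^ (-(d : ℝ) / α) * φ (s • (w - u)) * ‖u‖ ^ (-β)
      = t ^ (-(d : ℝ) / α) * (s ^ (β - d) * ∫ x, φ x * ‖s • w - x‖ ^ (-β)) := by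
        simp only [mul_assoc, integral_const_mul]
        rw [integral_comp_smul_sub_mul_norm_rpow_neg φ (by positivity) β w, hdim]
    _ ≤ t ^ (-β / α) * C := by
        rw [← mul_assoc, h_exp]
        gcongr
        exact hC _
    _ ≤ max C 1 * t ^ (-β / α) := by
        rw [mul_comm]; gcongr; exact le_max_left C 1

/-- Bound on the convolution of the scaled heat kernel with the Riesz kernel:
if `φ` is a nonnegative measurable function with `φ x ≤ c₀ * min 1 (|x|^{-d-α})` and
`0 < β < d`, then there is `c₁ > 0` such that for all `t > 0` and `w ∈ ℝ^d`,
`∫ t^{-d/α} φ((w-u) t^{-1/α}) |u|^{-β} du ≤ c₁ t^{-β/α}`. -/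
theorem riesz_kernel_single_integral_bound (d : ℕ) (hd : 1 ≤ d) (α β c₀ : ℝ)
    (hα : 0 < α) (hβ0 : 0 < β) (hβd : β < (d : ℝ)) (hc₀ : 0 < c₀)
    (φ : EuclideanSpace ℝ (Fin d) → ℝ)
    (hφ_meas : Measurable φ) (hφ_nonneg : ∀ x, 0 ≤ φ x)
    (hφ_bdd : ∀ x, φ x ≤ c₀)
    (hφ_decay : ∀ x : EuclideanSpace ℝ (Fin d), x ≠ 0 → φ x ≤ c₀ * ‖x‖ ^ (-((d : ℝ) + α))) :
    ∃ c₁ > 0, ∀ t : ℝ, 0 < t → ∀ w : EuclideanSpace ℝ (Fin d),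
      (∫ u : EuclideanSpace ℝ (Fin d),
        t ^ (-(d : ℝ) / α) * φ ((t ^ (-(1 : ℝ) / α)) • (w - u)) * ‖u‖ ^ (-β))
        ≤ c₁ * t ^ (-β / α) :=
  riesz_kernel_single_integral_bound_general d α β c₀ hα hβ0 hβd φ hφ_meas hφ_nonneg hφ_bdd hφ_decay
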